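/- (Monotonicity of the height function) For every two-colored admissible configuration C on [1,X]×[1,Y] with second-color boundary data, one has H¹(C) ≤ H²(C), where H¹(C) := Σ_{a=1}^X k(a,Y)₁ is the number of first-color lines exiting the top boundary, and H²(C) := Σ_{b=1}^Y j(1,b)₂ + Σ_{a=1}^X ((k(a,Y)₁ + k(a,Y)₂) mod 2) is the number of second-color lines entering the left boundary plus the number of columns whose top output has an odd total number of lines. -/

import Mathlib

/-- Exponents of the indeterminates `b₁` (resp. `b₂`) appearing in a formal weight:
`e` for exponent zero (factor `1`), `pl` for the factor `bᵢ`, `mi` for the factor `1 - bᵢ`. -/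
inductive Eps : Type
  | e : Eps
  | pl : Eps
  | mi : Eps
deriving DecidableEq

instance : Fintype Eps := ⟨{Eps.e, Eps.pl, Eps.mi}, fun x => by cases x <;> simp⟩

/-- The 10-element set of formal weights: `none` represents `0`, and `some (ε₁, ε₂)`
represents the monomial `f₁(ε₁) f₂(ε₂)`. -/
abbrev Wt : Type := Option (Eps × Eps)

/-- The join operation on exponents: `a ∨ a = a`, `e ∨ a = a ∨ e = a`, and the
clash `{+, −}` gives `none` (i.e. the factor `0`). -/
def Eps.vee : Eps → Eps → Option Eps
  | .e, a => some a
  | a, .e => some a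
  | .pl, .pl => some .pl
  | .mi, .mi => some .mi
  | .pl, .mi => none
  | .mi, .pl => none

/-- The Boolean-type product `*` on the formal weight set `Wt`. -/
def wmul : Wt → Wt → Wt
  | none, _ => none
  | _, none => none
  | some (a₁, a₂), some (c₁, c₂) =>
    match a₁.vee c₁, a₂.vee c₂ with
    | some x, some y => some (x, y)
    | _, _ => none

/-- Evaluation of an exponent of `b₁`: `f₁(e) = 1`, `f₁(+) = b₁`, `f₁(−) = 1 - b₁`. -/
def f1 (b1 : ℝ) : Eps → ℝ
  | .e => 1
  | .pl => b1
  | .mi => 1 - b1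

/-- Evaluation of an exponent of `b₂`: `f₂(e) = 1`, `f₂(+) = b₂`, `f₂(−) = 1 - b₂`. -/
def f2 (b2 : ℝ) : Eps → ℝ
  | .e => 1
  | .pl => b2
  | .mi => 1 - b2

/-- The evaluation map `ev_{b₁,b₂} : W → ℝ`. -/
def ev (b1 b2 : ℝ) : Wt → ℝ
  | none => 0
  | some (x, y) => f1 b1 x * f2 b2 y

/-- The formal one-colored vertex weights `L̂¹(i, j; k, l) ∈ W`
(`i` = bottom input, `j` = left input, `k` = top output, `l` = right output,
with `true` standing for `1`). -/
def Lhat1 : Bool → Bool → Bool → Bool → Wt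
  | true, false, true, false => some (.e, .e)
  | false, true, false, true => some (.e, .e)
  | false, false, false, false => some (.e, .pl)
  | false, false, true, true => some (.e, .mi)
  | true, true, true, true => some (.pl, .e)
  | true, true, false, false => some (.mi, .e)
  | _, _, _, _ => none

/-- The `r`-fold projection `s_r(x) = (x₁ + ⋯ + x_r) mod 2` of a vector `x ∈ {0,1}ⁿ`
(here `r : Fin n` stands for the `1`-indexed level `r + 1`). -/
def sproj {n : ℕ} (x : Fin n → Bool) (r : Fin n) : Bool :=
  decide ((∑ t ∈ Finset.univ.filter (fun t : Fin n => t ≤ r),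
    (if x t then (1 : ℕ) else 0)) % 2 = 1)

/-- The formal `n`-colored vertex weight
`L̂ⁿ(i, j; k, l) = ∏*_{r=1}^n L̂¹(s_r(i), s_r(j); s_r(k), s_r(l)) ∈ W`,
where the product is taken with respect to the Boolean-type product `*`. -/
def Lhatn {n : ℕ} (i j k l : Fin n → Bool) : Wt :=
  (List.ofFn (fun r : Fin n =>
    Lhat1 (sproj i r) (sproj j r) (sproj k r) (sproj l r))).foldr wmul (some (.e, .e))

/-- The real `n`-colored vertex weight `Lⁿ(i, j; k, l) = ev_{b₁,b₂}(L̂ⁿ(i, j; k, l))`. -/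
def Ln (b1 b2 : ℝ) {n : ℕ} (i j k l : Fin n → Bool) : ℝ :=
  ev b1 b2 (Lhatn i j k l)

/-- Encode a pair of colored occupation numbers (first color, second color)
as a vector in `{0,1}²`. -/
def pairVec (p : Bool × Bool) : Fin 2 → Bool := ![p.1, p.2]

/-!
Give a vertical edge carrying both colours, and a horizontal edge carrying only the second
colour, one unit of flux. Checking the finitely many admissible two-coloured vertices shows
that flux never increases through a vertex, so summing over the rectangle, the flux leaving
through the top and right boundaries is at most the flux entering through the bottom and left.
The bottom boundary carries no first colour, hence no flux, and a left edge carries flux only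
if it carries the second colour. Finally, a top edge with the first colour either has odd
total occupation or carries both colours, i.e. flux.
-/

def vflux (x : Bool × Bool) : ℕ := if x.1 && x.2 then 1 else 0

def hflux (x : Bool × Bool) : ℕ := if !x.1 && x.2 then 1 else 0

lemma flux_le_of_Lhatn_ne_none : ∀ i j k l : Bool × Bool,
    Lhatn (pairVec i) (pairVec j) (pairVec k) (pairVec l) ≠ (none : Wt) →
    vflux k + hflux l ≤ vflux i + hflux j := by
  decide

lemma vflux_eq_zero_of_fst_eq_false {x : Bool × Bool} (hx : x.1 = false) : vflux x = 0 := by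
  simp [vflux, hx]

lemma hflux_le_snd (x : Bool × Bool) : hflux x ≤ if x.2 then 1 else 0 := by
  rcases x with ⟨_ | _, _ | _⟩ <;> simp [hflux]

lemma fst_le_parity_add_vflux (x : Bool × Bool) :
    (if x.1 then (1 : ℕ) else 0) ≤
      ((if x.1 then (1 : ℕ) else 0) + (if x.2 then (1 : ℕ) else 0)) % 2 + vflux x := by
  rcases x with ⟨_ | _, _ | _⟩ <;> simp [vflux]

theorem Finset.sum_Icc_add_le_sum_Icc_add_of_chain {M : Type*} [AddCommMonoid M]
    [PartialOrder M] [IsOrderedAddMonoid M] {n : ℕ} (hn : 1 ≤ n) (u v fIn fOut : ℕ → M)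
    (hcell : ∀ a, 1 ≤ a → a ≤ n → u a + fOut a ≤ v a + fIn a)
    (hglue : ∀ a, 1 ≤ a → a < n → fIn (a + 1) = fOut a) :
    ∑ a ∈ Icc 1 n, u a + fOut n ≤ ∑ a ∈ Icc 1 n, v a + fIn 1 := by
  induction n, hn using Nat.le_induction with
  | base => simpa using hcell 1 le_rfl le_rfl
  | succ n hn ih =>
    have ih := ih (fun a h1 h2 => hcell a h1 (by omega)) (fun a h1 h2 => hglue a h1 (by omega))
    have hlast := hcell (n + 1) (by omega) le_rfl
    rw [hglue n hn (by omega)] at hlast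
    rw [sum_Icc_succ_top (by omega), sum_Icc_succ_top (by omega)]
    calc ∑ a ∈ Icc 1 n, u a + u (n + 1) + fOut (n + 1)
        = ∑ a ∈ Icc 1 n, u a + (u (n + 1) + fOut (n + 1)) := add_assoc _ _ _
      _ ≤ ∑ a ∈ Icc 1 n, u a + (v (n + 1) + fOut n) := by gcongr
      _ = (∑ a ∈ Icc 1 n, u a + fOut n) + v (n + 1) := by abel
      _ ≤ (∑ a ∈ Icc 1 n, v a + fIn 1) + v (n + 1) := by gcongr
      _ = ∑ a ∈ Icc 1 n, v a + v (n + 1) + fIn 1 := by abel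

lemma row_flux_le {X Y b : ℕ} (hX : 1 ≤ X) {ii jj kk ll : ℕ → ℕ → Bool × Bool}
    (hcompatH : ∀ a b, 1 ≤ a → a < X → 1 ≤ b → b ≤ Y → jj (a + 1) b = ll a b)
    (hadm : ∀ a b, 1 ≤ a → a ≤ X → 1 ≤ b → b ≤ Y →
      Lhatn (pairVec (ii a b)) (pairVec (jj a b)) (pairVec (kk a b)) (pairVec (ll a b))
        ≠ (none : Wt))
    (hb1 : 1 ≤ b) (hbY : b ≤ Y) :
    ∑ a ∈ Finset.Icc 1 X, vflux (kk a b) + hflux (ll X b) ≤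
      ∑ a ∈ Finset.Icc 1 X, vflux (ii a b) + hflux (jj 1 b) :=
  Finset.sum_Icc_add_le_sum_Icc_add_of_chain hX _ _ (fun a => hflux (jj a b))
    (fun a => hflux (ll a b))
    (fun a h1 h2 => flux_le_of_Lhatn_ne_none _ _ _ _ (hadm a b h1 h2 hb1 hbY))
    (fun a h1 h2 => by rw [hcompatH a b h1 h2 hb1 hbY])

lemma grid_flux_le {X Y : ℕ} (hX : 1 ≤ X) (hY : 1 ≤ Y) {ii jj kk ll : ℕ → ℕ → Bool × Bool}
    (hcompatV : ∀ a b, 1 ≤ a → a ≤ X → 1 ≤ b → b < Y → ii a (b + 1) = kk a b)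
    (hcompatH : ∀ a b, 1 ≤ a → a < X → 1 ≤ b → b ≤ Y → jj (a + 1) b = ll a b)
    (hadm : ∀ a b, 1 ≤ a → a ≤ X → 1 ≤ b → b ≤ Y →
      Lhatn (pairVec (ii a b)) (pairVec (jj a b)) (pairVec (kk a b)) (pairVec (ll a b))
        ≠ (none : Wt)) :
    ∑ b ∈ Finset.Icc 1 Y, hflux (ll X b) + ∑ a ∈ Finset.Icc 1 X, vflux (kk a Y) ≤
      ∑ b ∈ Finset.Icc 1 Y, hflux (jj 1 b) + ∑ a ∈ Finset.Icc 1 X, vflux (ii a 1) :=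
  Finset.sum_Icc_add_le_sum_Icc_add_of_chain hY _ _
    (fun b => ∑ a ∈ Finset.Icc 1 X, vflux (ii a b))
    (fun b => ∑ a ∈ Finset.Icc 1 X, vflux (kk a b))
    (fun b h1 h2 => by
      rw [add_comm, add_comm (hflux _)]
      exact row_flux_le hX hcompatH hadm h1 h2)
    (fun b h1 h2 => Finset.sum_congr rfl fun a ha => by
      rw [Finset.mem_Icc] at ha
      rw [hcompatV a b ha.1 ha.2 h1 h2])

theorem two_colored_height_monotonicity_general
    (X Y : ℕ) (hX : 1 ≤ X) (hY : 1 ≤ Y)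
    (ii jj kk ll : ℕ → ℕ → Bool × Bool)
    (hcompatV : ∀ a b, 1 ≤ a → a ≤ X → 1 ≤ b → b < Y → ii a (b + 1) = kk a b)
    (hcompatH : ∀ a b, 1 ≤ a → a < X → 1 ≤ b → b ≤ Y → jj (a + 1) b = ll a b)
    (hbdB : ∀ a, 1 ≤ a → a ≤ X → (ii a 1).1 = false)
    (hadm : ∀ a b, 1 ≤ a → a ≤ X → 1 ≤ b → b ≤ Y →
      Lhatn (pairVec (ii a b)) (pairVec (jj a b)) (pairVec (kk a b)) (pairVec (ll a b))
        ≠ (none : Wt)) :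
    (∑ a ∈ Finset.Icc 1 X, (if (kk a Y).1 then (1 : ℕ) else 0)) ≤
      (∑ b ∈ Finset.Icc 1 Y, (if (jj 1 b).2 then (1 : ℕ) else 0)) +
        ∑ a ∈ Finset.Icc 1 X,
          (((if (kk a Y).1 then (1 : ℕ) else 0) + (if (kk a Y).2 then (1 : ℕ) else 0)) % 2) := by
  have hgrid := grid_flux_le hX hY hcompatV hcompatH hadm
  have hbottom : ∑ a ∈ Finset.Icc 1 X, vflux (ii a 1) = 0 :=
    Finset.sum_eq_zero fun a ha => by
      rw [Finset.mem_Icc] at ha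
      exact vflux_eq_zero_of_fst_eq_false (hbdB a ha.1 ha.2)
  have htop := Finset.sum_le_sum fun a (_ : a ∈ Finset.Icc 1 X) =>
    fst_le_parity_add_vflux (kk a Y)
  have hleft := Finset.sum_le_sum fun b (_ : b ∈ Finset.Icc 1 Y) => hflux_le_snd (jj 1 b)
  rw [Finset.sum_add_distrib] at htop
  omega

/-- Monotonicity of the height function: for every two-colored admissible configuration
on `[1,X] × [1,Y]` with second-color boundary data, the number `H¹` of first-color lines
exiting the top boundary is at most `H²`, the number of second-color lines entering the
left boundary plus the number of columns whose top output carries an odd number of lines. -/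
theorem two_colored_height_monotonicity
    (X Y : ℕ) (hX : 1 ≤ X) (hY : 1 ≤ Y)
    (ii jj kk ll : ℕ → ℕ → Bool × Bool)
    (hcompatV : ∀ a b, 1 ≤ a → a ≤ X → 1 ≤ b → b < Y → ii a (b + 1) = kk a b)
    (hcompatH : ∀ a b, 1 ≤ a → a < X → 1 ≤ b → b ≤ Y → jj (a + 1) b = ll a b)
    (hbdB : ∀ a, 1 ≤ a → a ≤ X → (ii a 1).1 = false)
    (hbdL : ∀ b, 1 ≤ b → b ≤ Y → (jj 1 b).1 = false)
    (hadm : ∀ a b, 1 ≤ a → a ≤ X → 1 ≤ b → b ≤ Y →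
      Lhatn (pairVec (ii a b)) (pairVec (jj a b)) (pairVec (kk a b)) (pairVec (ll a b))
        ≠ (none : Wt)) :
    (∑ a ∈ Finset.Icc 1 X, (if (kk a Y).1 then (1 : ℕ) else 0)) ≤
      (∑ b ∈ Finset.Icc 1 Y, (if (jj 1 b).2 then (1 : ℕ) else 0)) +
        ∑ a ∈ Finset.Icc 1 X,
          (((if (kk a Y).1 then (1 : ℕ) else 0) + (if (kk a Y).2 then (1 : ℕ) else 0)) % 2) :=
  two_colored_height_monotonicity_general X Y hX hY ii jj kk ll hcompatV hcompatH hbdB hadm
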